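/- (Binet's first formula) For every real x > 0, ln Γ(x+1) = (x + 1/2)·ln x − x + (1/2)·ln(2π) + ∫₀^∞ φ(t)·e^{−xt} dt, where φ(t) = (1/(e^t − 1) − 1/t + 1/2)/t for t > 0. -/

import Mathlib

open Real MeasureTheory

/-- `φ(t) = (1/(eᵗ − 1) − 1/t + 1/2)/t`. -/
noncomputable def binetPhi (t : ℝ) : ℝ :=
  (1 / (Real.exp t - 1) - 1 / t + 1 / 2) / t

section BinetAux
open Filter Set Topology
namespace Binet





/-- helper: nonneg of function with nonneg derivative vanishing at 0 -/
lemma nonneg_of_deriv {f f' : ℝ → ℝ} (h0 : f 0 = 0)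
    (hd : ∀ t, HasDerivAt f (f' t) t) (h' : ∀ t, 0 ≤ t → 0 ≤ f' t) :
    ∀ t, 0 ≤ t → 0 ≤ f t := by
  intro t ht
  have hmono : MonotoneOn f (Ici (0:ℝ)) := by
    apply monotoneOn_of_deriv_nonneg (convex_Ici 0)
      (fun x _ => (hd x).continuousAt.continuousWithinAt)
      (fun x hx => ((hd x).differentiableAt).differentiableWithinAt)
    intro x hx
    rw [interior_Ici] at hx
    rw [(hd x).deriv]
    exact h' x (le_of_lt hx)
  have := hmono (self_mem_Ici) (mem_Ici.2 ht) ht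
  rwa [h0] at this

lemma u_nonneg : ∀ t : ℝ, 0 ≤ t → 0 ≤ t * Real.exp t / 2 + t / 2 - Real.exp t + 1 := by
  have hv : ∀ t : ℝ, 0 ≤ t → 0 ≤ t * Real.exp t / 2 - Real.exp t / 2 + 1/2 := by
    apply nonneg_of_deriv (f' := fun t => t * Real.exp t / 2)
    · simp
    · intro t
      have h1 : HasDerivAt (fun t : ℝ => t * Real.exp t) (1 * Real.exp t + t * Real.exp t) t :=
        (hasDerivAt_id t).mul (Real.hasDerivAt_exp t)
      have := ((h1.div_const 2).sub ((Real.hasDerivAt_exp t).div_const 2)).add_const (1/2)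
      refine this.congr_deriv ?_
      ring
    · intro t ht
      positivity
  apply nonneg_of_deriv (f' := fun t => t * Real.exp t / 2 - Real.exp t / 2 + 1/2)
  · simp
  · intro t
    have h1 : HasDerivAt (fun t : ℝ => t * Real.exp t) (1 * Real.exp t + t * Real.exp t) t :=
      (hasDerivAt_id t).mul (Real.hasDerivAt_exp t)
    have := (((h1.div_const 2).add ((hasDerivAt_id t).div_const 2)).sub
      (Real.hasDerivAt_exp t)).add_const 1
    refine this.congr_deriv ?_
    ring
  · exact hv

lemma exp_sub_one_pos {t : ℝ} (ht : 0 < t) : 0 < Real.exp t - 1 := by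
  simpa using Real.exp_lt_exp.2 ht

/-- the numerator `A(t) = 1/(eᵗ−1) − 1/t + 1/2` is nonnegative -/
lemma A_nonneg {t : ℝ} (ht : 0 < t) : 0 ≤ 1 / (Real.exp t - 1) - 1 / t + 1 / 2 := by
  have he := exp_sub_one_pos ht
  have hu := u_nonneg t ht.le
  have key : 1 / (Real.exp t - 1) - 1 / t + 1 / 2
      = (t * Real.exp t / 2 + t / 2 - Real.exp t + 1) / (t * (Real.exp t - 1)) := by
    field_simp
    ring
  rw [key]
  positivity

/-- `eᵗ ≥ 1 + t + t²/2 + t³/6` for `t ≥ 0` -/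
lemma exp_ge_cubic {t : ℝ} (ht : 0 ≤ t) :
    1 + t + t^2/2 + t^3/6 ≤ Real.exp t := by
  have := Real.sum_le_exp_of_nonneg ht 4
  rw [Finset.sum_range_succ, Finset.sum_range_succ, Finset.sum_range_succ,
    Finset.sum_range_succ] at this
  norm_num [Nat.factorial] at this
  linarith

/-- `A(t) ≤ t` -/
lemma A_le {t : ℝ} (ht : 0 < t) : 1 / (Real.exp t - 1) - 1 / t + 1 / 2 ≤ t := by
  have he := exp_sub_one_pos ht
  have hc := exp_ge_cubic ht.le
  rw [div_sub_div _ _ (ne_of_gt he) (ne_of_gt ht), div_add' _ _ _ (by positivity)]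
  rw [div_le_iff₀ (by positivity)]
  nlinarith [sq_nonneg t, sq_nonneg (t-1), pow_pos ht 3, pow_pos ht 4]

lemma phi_nonneg {t : ℝ} (ht : 0 < t) : 0 ≤ binetPhi t :=
  div_nonneg (A_nonneg ht) ht.le

lemma phi_le_one {t : ℝ} (ht : 0 < t) : binetPhi t ≤ 1 := by
  rw [binetPhi, div_le_one ht]
  simpa using A_le ht

/-- `A(t) ≤ 2` -/
lemma A_le_two {t : ℝ} (ht : 0 < t) : 1 / (Real.exp t - 1) - 1 / t + 1 / 2 ≤ 2 := by
  rcases le_or_gt t 1 with h | h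
  · linarith [A_le ht]
  · have h1 : Real.exp 1 - 1 ≤ Real.exp t - 1 := by
      have := Real.exp_le_exp.2 h.le
      linarith
    have h2 : (0:ℝ) < Real.exp 1 - 1 := exp_sub_one_pos one_pos
    have h3 : 1 / (Real.exp t - 1) ≤ 1 / (Real.exp 1 - 1) :=
      one_div_le_one_div_of_le h2 h1
    have h4 : 1 / (Real.exp 1 - 1) ≤ 1 := by
      rw [div_le_one h2]
      have := Real.add_one_le_exp (1:ℝ)
      linarith
    have h5 : 0 < 1 / t := by positivity
    linarith

lemma phi_continuousOn : ContinuousOn binetPhi (Ioi (0:ℝ)) := by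
  apply ContinuousOn.div _ continuousOn_id
  · intro t ht; exact ne_of_gt ht
  · apply ContinuousOn.add
    · apply ContinuousOn.sub
      · exact continuousOn_const.div
          (Real.continuous_exp.continuousOn.sub continuousOn_const)
          (fun t ht => ne_of_gt (exp_sub_one_pos ht))
      · exact continuousOn_const.div continuousOn_id (fun t ht => ne_of_gt ht)
    · exact continuousOn_const


lemma integrable_exp_mul {x : ℝ} (hx : 0 < x) :
    IntegrableOn (fun t => Real.exp (-x * t)) (Ioi (0:ℝ)) :=
  exp_neg_integrableOn_Ioi 0 hx

lemma integral_exp_mul {x : ℝ} (hx : 0 < x) :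
    ∫ t in Ioi (0:ℝ), Real.exp (-x * t) = 1 / x := by
  have := Real.integral_rpow_mul_exp_neg_mul_Ioi one_pos hx
  simp only [sub_self, Real.rpow_zero, one_mul, Real.rpow_one, Real.Gamma_one,
    mul_one] at this
  rw [← this]
  congr 1 with t
  rw [neg_mul]

/-- generic integrability: measurable on Ioi 0 and bounded by `C·exp(-x t)` -/
lemma integrableOn_of_bound {f : ℝ → ℝ} {x C : ℝ} (hx : 0 < x)
    (hm : AEStronglyMeasurable f (volume.restrict (Ioi 0)))
    (hb : ∀ t ∈ Ioi (0:ℝ), ‖f t‖ ≤ C * Real.exp (-x * t)) :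
    IntegrableOn f (Ioi (0:ℝ)) := by
  apply Integrable.mono ((integrable_exp_mul hx).const_mul C) hm
  refine (ae_restrict_iff' measurableSet_Ioi).2 (ae_of_all _ fun t ht => ?_)
  refine (hb t ht).trans ?_
  rw [Real.norm_eq_abs]
  exact le_abs_self _

lemma phi_exp_aesm {x : ℝ} :
    AEStronglyMeasurable (fun t => binetPhi t * Real.exp (-x * t))
      (volume.restrict (Ioi 0)) := by
  apply ContinuousOn.aestronglyMeasurable _ measurableSet_Ioi
  exact phi_continuousOn.mul ((Real.continuous_exp.comp
    (continuous_const.mul continuous_id)).continuousOn)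

lemma phi_exp_bound {x t : ℝ} (ht : 0 < t) :
    ‖binetPhi t * Real.exp (-x * t)‖ ≤ 1 * Real.exp (-x * t) := by
  rw [Real.norm_eq_abs, abs_mul, abs_of_nonneg (phi_nonneg ht),
    abs_of_nonneg (Real.exp_pos _).le, one_mul]
  exact mul_le_of_le_one_left (Real.exp_pos _).le (phi_le_one ht)

lemma integrableOn_phi_exp {x : ℝ} (hx : 0 < x) :
    IntegrableOn (fun t => binetPhi t * Real.exp (-x * t)) (Ioi (0:ℝ)) :=
  integrableOn_of_bound hx phi_exp_aesm (fun t ht => phi_exp_bound ht)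

noncomputable def J (x : ℝ) : ℝ := ∫ t in Ioi (0:ℝ), binetPhi t * Real.exp (-x * t)

lemma abs_J_le {x : ℝ} (hx : 0 < x) : |J x| ≤ 1 / x := by
  have h := norm_integral_le_of_norm_le
    (μ := volume.restrict (Ioi (0:ℝ)))
    (f := fun t => binetPhi t * Real.exp (-x * t))
    (g := fun t => Real.exp (-x * t)) (integrable_exp_mul hx)
    ((ae_restrict_iff' measurableSet_Ioi).2 (ae_of_all _ fun t ht => by
      simpa using phi_exp_bound (x := x) ht))
  rw [integral_exp_mul hx] at h
  exact h

/-- Frullani-type integrand facts -/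
lemma one_sub_exp_neg_le {t : ℝ} (ht : 0 ≤ t) : 1 - Real.exp (-t) ≤ t := by
  have := Real.add_one_le_exp (-t)
  linarith

lemma one_sub_exp_neg_nonneg {t : ℝ} (ht : 0 ≤ t) : 0 ≤ 1 - Real.exp (-t) := by
  have : Real.exp (-t) ≤ Real.exp 0 := Real.exp_le_exp.2 (by linarith)
  simpa using this

lemma exp_diff_eq {x t : ℝ} :
    Real.exp (-x * t) - Real.exp (-(x+1) * t) = Real.exp (-x * t) * (1 - Real.exp (-t)) := by
  rw [mul_sub, mul_one, ← Real.exp_add]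
  ring_nf

lemma F_integrand_nonneg {x t : ℝ} (ht : 0 < t) :
    0 ≤ (Real.exp (-x * t) - Real.exp (-(x+1) * t)) / t := by
  apply div_nonneg _ ht.le
  rw [exp_diff_eq]
  exact mul_nonneg (Real.exp_pos _).le (one_sub_exp_neg_nonneg ht.le)

lemma F_integrand_le {x t : ℝ} (ht : 0 < t) :
    (Real.exp (-x * t) - Real.exp (-(x+1) * t)) / t ≤ Real.exp (-x * t) := by
  rw [exp_diff_eq, div_le_iff₀ ht]
  exact mul_le_mul_of_nonneg_left (one_sub_exp_neg_le ht.le) (Real.exp_pos _).le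

noncomputable def F (x : ℝ) : ℝ :=
  ∫ t in Ioi (0:ℝ), (Real.exp (-x * t) - Real.exp (-(x+1) * t)) / t

lemma F_aesm {x : ℝ} :
    AEStronglyMeasurable (fun t => (Real.exp (-x * t) - Real.exp (-(x+1) * t)) / t)
      (volume.restrict (Ioi 0)) := by
  apply ContinuousOn.aestronglyMeasurable _ measurableSet_Ioi
  exact (((Real.continuous_exp.comp (continuous_const.mul continuous_id)).sub
    (Real.continuous_exp.comp (continuous_const.mul continuous_id))).continuousOn).div
    continuousOn_id (fun t ht => ne_of_gt ht)

lemma integrableOn_F_integrand {x : ℝ} (hx : 0 < x) :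
    IntegrableOn (fun t => (Real.exp (-x * t) - Real.exp (-(x+1) * t)) / t) (Ioi (0:ℝ)) := by
  apply integrableOn_of_bound hx F_aesm
  intro t ht
  rw [Real.norm_eq_abs, abs_of_nonneg (F_integrand_nonneg ht), one_mul]
  exact F_integrand_le ht

lemma abs_F_le {x : ℝ} (hx : 0 < x) : |F x| ≤ 1 / x := by
  have h := norm_integral_le_of_norm_le
    (μ := volume.restrict (Ioi (0:ℝ)))
    (f := fun t => (Real.exp (-x * t) - Real.exp (-(x+1) * t)) / t)
    (g := fun t => Real.exp (-x * t)) (integrable_exp_mul hx)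
    ((ae_restrict_iff' measurableSet_Ioi).2 (ae_of_all _ fun t ht => by
      rw [Real.norm_eq_abs, abs_of_nonneg (F_integrand_nonneg ht)]
      exact F_integrand_le ht))
  rw [integral_exp_mul hx] at h
  exact h


lemma F_def : ∀ x, F x = ∫ t in Ioi (0:ℝ), (Real.exp (-x * t) - Real.exp (-(x+1) * t)) / t :=
  fun _ => rfl

/-- two functions with equal derivatives on `Ioi 0` whose difference tends to `0`
at infinity are equal on `Ioi 0`. -/
lemma eq_of_hasDerivAt_of_tendsto {f g d : ℝ → ℝ}
    (hf : ∀ x, 0 < x → HasDerivAt f (d x) x)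
    (hg : ∀ x, 0 < x → HasDerivAt g (d x) x)
    (hlim : Tendsto (fun x => f x - g x) atTop (𝓝 0)) :
    ∀ x, 0 < x → f x = g x := by
  intro x hx
  set h : ℝ → ℝ := fun y => f y - g y with hh
  have hconst : ∀ y, x < y → h y = h x := by
    intro y hy
    have hd : ∀ z ∈ Icc x y, HasDerivAt h 0 z := by
      intro z hz
      have hz0 : 0 < z := lt_of_lt_of_le hx hz.1
      have := (hf z hz0).sub (hg z hz0)
      rw [sub_self] at this
      exact this
    obtain ⟨c, hc, hc'⟩ := exists_hasDerivAt_eq_slope h (fun _ => 0) hy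
      (fun z hz => (hd z hz).continuousAt.continuousWithinAt)
      (fun z hz => hd z (Ioo_subset_Icc_self hz))
    have : (h y - h x) / (y - x) = 0 := hc'.symm
    have hxy : y - x ≠ 0 := sub_ne_zero.2 (ne_of_gt hy)
    field_simp at this
    linarith
  have h1 : Tendsto h atTop (𝓝 (h x)) := by
    apply Tendsto.congr' _ tendsto_const_nhds
    filter_upwards [eventually_gt_atTop x] with y hy
    exact (hconst y hy).symm
  have := tendsto_nhds_unique h1 hlim
  simp only [hh] at this
  linarith [this]

lemma hasDerivAt_exp_mul (t x : ℝ) :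
    HasDerivAt (fun x => Real.exp (-x * t)) (-t * Real.exp (-x * t)) x := by
  have h : HasDerivAt (fun x : ℝ => -x * t) (-t) x := by
    simpa using ((hasDerivAt_id x).neg.mul_const t)
  simpa [mul_comm] using h.exp

lemma hasDerivAt_exp_mul' (t x : ℝ) :
    HasDerivAt (fun x => Real.exp (-(x+1) * t)) (-t * Real.exp (-(x+1) * t)) x := by
  have h : HasDerivAt (fun x : ℝ => -(x+1) * t) (-t) x := by
    simpa using (((hasDerivAt_id x).add_const 1).neg.mul_const t)
  simpa [mul_comm] using h.exp

lemma F_hasDerivAt {x₀ : ℝ} (hx : 0 < x₀) :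
    HasDerivAt F (1 / (x₀ + 1) - 1 / x₀) x₀ := by
  have hε : 0 < x₀ / 2 := by linarith
  have key := hasDerivAt_integral_of_dominated_loc_of_deriv_le
    (μ := volume.restrict (Ioi (0:ℝ))) (x₀ := x₀)
    (F := fun x t => (Real.exp (-x * t) - Real.exp (-(x+1) * t)) / t)
    (F' := fun x t => Real.exp (-(x+1) * t) - Real.exp (-x * t))
    (bound := fun t => 2 * Real.exp (-(x₀/2) * t)) (Metric.ball_mem_nhds x₀ hε)
    (Eventually.of_forall fun x => F_aesm)
    (integrableOn_F_integrand hx)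
    (by
      apply ContinuousOn.aestronglyMeasurable _ measurableSet_Ioi
      exact ((Real.continuous_exp.comp (continuous_const.mul continuous_id)).sub
        (Real.continuous_exp.comp (continuous_const.mul continuous_id))).continuousOn)
    (by
      refine (ae_restrict_iff' measurableSet_Ioi).2 (ae_of_all _ fun t ht x hx' => ?_)
      have hxt : x₀ / 2 < x := by
        have := abs_sub_lt_iff.1 (mem_ball_iff_norm.1 hx')
        linarith [this.2]
      have h1 : Real.exp (-x * t) ≤ Real.exp (-(x₀/2) * t) :=
        Real.exp_le_exp.2 (by nlinarith [mem_Ioi.1 ht])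
      have h2 : Real.exp (-(x+1) * t) ≤ Real.exp (-(x₀/2) * t) :=
        Real.exp_le_exp.2 (by nlinarith [mem_Ioi.1 ht])
      rw [Real.norm_eq_abs]
      have := abs_sub (Real.exp (-(x+1) * t)) (Real.exp (-x * t))
      rw [abs_sub_le_iff]
      constructor <;> nlinarith [Real.exp_pos (-x * t), Real.exp_pos (-(x+1) * t)])
    (((integrable_exp_mul hε).const_mul 2))
    (by
      refine (ae_restrict_iff' measurableSet_Ioi).2 (ae_of_all _ fun t ht x _ => ?_)
      have ht0 : t ≠ 0 := ne_of_gt ht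
      have h := ((hasDerivAt_exp_mul t x).sub (hasDerivAt_exp_mul' t x)).div_const t
      refine h.congr_deriv ?_
      field_simp
      ring)
  have heq : (fun x => ∫ t in Ioi (0:ℝ), (Real.exp (-x * t) - Real.exp (-(x+1) * t)) / t) = F := by
    funext x; exact (F_def x).symm
  rw [heq] at key
  have hval : (∫ t in Ioi (0:ℝ), (Real.exp (-(x₀+1) * t) - Real.exp (-x₀ * t)))
      = 1 / (x₀ + 1) - 1 / x₀ := by
    rw [integral_sub (integrable_exp_mul (by linarith)) (integrable_exp_mul hx),
      integral_exp_mul (by linarith : (0:ℝ) < x₀ + 1), integral_exp_mul hx]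
  rw [hval] at key
  exact key.2

lemma tendsto_log_one_add_one_div :
    Tendsto (fun x : ℝ => Real.log (x+1) - Real.log x) atTop (𝓝 0) := by
  have h1 : Tendsto (fun x : ℝ => 1 + 1/x) atTop (𝓝 1) := by
    simpa using (tendsto_const_nhds (α := ℝ) (x := (1:ℝ))).add
      (tendsto_inv_atTop_zero (𝕜 := ℝ))
  have h2 : Tendsto (fun x : ℝ => Real.log (1 + 1/x)) atTop (𝓝 (Real.log 1)) :=
    ((Real.continuousAt_log one_ne_zero).tendsto).comp h1
  rw [Real.log_one] at h2
  apply h2.congr'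
  filter_upwards [eventually_gt_atTop (0:ℝ)] with x hx
  rw [← Real.log_div (by positivity) (ne_of_gt hx)]
  congr 1
  field_simp

lemma tendsto_F : Tendsto F atTop (𝓝 0) := by
  apply squeeze_zero_norm'
  · filter_upwards [eventually_gt_atTop (0:ℝ)] with x hx
    simpa [Real.norm_eq_abs] using abs_F_le hx
  · simpa [one_div] using tendsto_inv_atTop_zero (𝕜 := ℝ)

lemma F_eq : ∀ x, 0 < x → F x = Real.log (x+1) - Real.log x := by
  apply eq_of_hasDerivAt_of_tendsto (d := fun x => 1 / (x+1) - 1/x)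
  · intro x hx; exact F_hasDerivAt hx
  · intro x hx
    have h1 : HasDerivAt (fun x : ℝ => Real.log (x+1)) (1/(x+1)) x := by
      simpa using ((hasDerivAt_id x).add_const 1).log (by simp only [id]; intro h; linarith)
    have h2 : HasDerivAt Real.log (1/x) x := by
      simpa [one_div] using Real.hasDerivAt_log (ne_of_gt hx)
    exact h1.sub h2
  · simpa using tendsto_F.sub tendsto_log_one_add_one_div



lemma exp_shift (x t : ℝ) : Real.exp (-x * t) = Real.exp (-(x+1) * t) * Real.exp t := by
  rw [← Real.exp_add]; ring_nf

/-- the K-integrand -/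
lemma integrableOn_K_integrand {x : ℝ} (hx : 0 < x) :
    IntegrableOn (fun t => binetPhi t * (Real.exp (-x * t) - Real.exp (-(x+1) * t)))
      (Ioi (0:ℝ)) := by
  have h : IntegrableOn (fun t => binetPhi t * Real.exp (-x * t)
      - binetPhi t * Real.exp (-(x+1) * t)) (Ioi (0:ℝ)) :=
    (integrableOn_phi_exp hx).sub (integrableOn_phi_exp (x := x+1) (by linarith))
  apply h.congr
  refine (ae_restrict_iff' measurableSet_Ioi).2 (ae_of_all _ fun t ht => ?_)
  ring

lemma K_eq_integral {x : ℝ} (hx : 0 < x) :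
    (∫ t in Ioi (0:ℝ), binetPhi t * (Real.exp (-x * t) - Real.exp (-(x+1) * t)))
      = J x - J (x+1) := by
  rw [J, J]
  rw [← integral_sub (integrableOn_phi_exp hx) (integrableOn_phi_exp (by linarith))]
  apply setIntegral_congr_fun measurableSet_Ioi
  intro t ht
  ring

/-- pointwise identity for the derivative integrand -/
lemma K_deriv_integrand_eq {x t : ℝ} (ht : 0 < t) :
    binetPhi t * (t * (Real.exp (-(x+1) * t) - Real.exp (-x * t)))
      = -(Real.exp (-(x+1) * t)) + (Real.exp (-x * t) - Real.exp (-(x+1) * t)) / t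
        - (Real.exp (-x * t) - Real.exp (-(x+1) * t)) / 2 := by
  have ht0 : t ≠ 0 := ne_of_gt ht
  have hE : Real.exp t - 1 ≠ 0 := ne_of_gt (exp_sub_one_pos ht)
  rw [binetPhi, exp_shift x t]
  field_simp
  ring

lemma K_deriv_aesm {x : ℝ} :
    AEStronglyMeasurable
      (fun t => binetPhi t * (t * (Real.exp (-(x+1) * t) - Real.exp (-x * t))))
      (volume.restrict (Ioi 0)) := by
  apply ContinuousOn.aestronglyMeasurable _ measurableSet_Ioi
  apply phi_continuousOn.mul
  apply continuousOn_id.mul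
  exact ((Real.continuous_exp.comp (continuous_const.mul continuous_id)).sub
    (Real.continuous_exp.comp (continuous_const.mul continuous_id))).continuousOn

lemma tphi_le_two {t : ℝ} (ht : 0 < t) : binetPhi t * t ≤ 2 := by
  rw [binetPhi, div_mul_cancel₀ _ (ne_of_gt ht)]
  exact A_le_two ht

lemma tphi_nonneg {t : ℝ} (ht : 0 < t) : 0 ≤ binetPhi t * t :=
  mul_nonneg (phi_nonneg ht) ht.le

lemma K_deriv_bound {x y t : ℝ} (ht : 0 < t) (hxy : y ≤ x) :
    ‖binetPhi t * (t * (Real.exp (-(x+1) * t) - Real.exp (-x * t)))‖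
      ≤ 2 * Real.exp (-y * t) := by
  rw [Real.norm_eq_abs, abs_mul, abs_of_nonneg (phi_nonneg ht)]
  have h1 : |t * (Real.exp (-(x+1) * t) - Real.exp (-x * t))|
      = t * (Real.exp (-x * t) - Real.exp (-(x+1) * t)) := by
    rw [abs_mul, abs_of_nonneg ht.le, abs_sub_comm, abs_of_nonneg]
    have : Real.exp (-(x+1) * t) ≤ Real.exp (-x * t) :=
      Real.exp_le_exp.2 (by nlinarith)
    linarith
  rw [h1]
  have h2 : Real.exp (-x * t) - Real.exp (-(x+1) * t) ≤ Real.exp (-x * t) := by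
    linarith [Real.exp_pos (-(x+1) * t)]
  have h3 : Real.exp (-x * t) ≤ Real.exp (-y * t) := Real.exp_le_exp.2 (by nlinarith)
  calc binetPhi t * (t * (Real.exp (-x * t) - Real.exp (-(x+1) * t)))
      = binetPhi t * t * (Real.exp (-x * t) - Real.exp (-(x+1) * t)) := by ring
    _ ≤ 2 * Real.exp (-y * t) := by
        apply mul_le_mul (tphi_le_two ht) (h2.trans h3) _ (by norm_num)
        have := Real.exp_le_exp.2 (show -(x+1)*t ≤ -x*t by nlinarith)
        linarith [Real.exp_pos (-(x+1)*t)]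

/-- value of the derivative integral -/
lemma K_deriv_value {x : ℝ} (hx : 0 < x) :
    (∫ t in Ioi (0:ℝ), binetPhi t * (t * (Real.exp (-(x+1) * t) - Real.exp (-x * t))))
      = -(1/(x+1)) + F x - (1/x - 1/(x+1))/2 := by
  have hx1 : (0:ℝ) < x + 1 := by linarith
  have e1 : IntegrableOn (fun t => -(Real.exp (-(x+1) * t))) (Ioi (0:ℝ)) :=
    (integrable_exp_mul hx1).neg
  have e2 := integrableOn_F_integrand hx
  have e3 : IntegrableOn (fun t => (Real.exp (-x * t) - Real.exp (-(x+1) * t)) / 2)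
      (Ioi (0:ℝ)) :=
    ((integrable_exp_mul hx).sub (integrable_exp_mul hx1)).div_const 2
  have key : (∫ t in Ioi (0:ℝ), binetPhi t * (t * (Real.exp (-(x+1) * t) - Real.exp (-x * t))))
      = ∫ t in Ioi (0:ℝ), (-(Real.exp (-(x+1) * t))
          + (Real.exp (-x * t) - Real.exp (-(x+1) * t)) / t
          - (Real.exp (-x * t) - Real.exp (-(x+1) * t)) / 2) := by
    apply setIntegral_congr_fun measurableSet_Ioi
    intro t ht
    exact K_deriv_integrand_eq ht
  have hsum : IntegrableOn (fun t => -(Real.exp (-(x+1) * t))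
      + (Real.exp (-x * t) - Real.exp (-(x+1) * t)) / t) (Ioi (0:ℝ)) := e1.add e2
  rw [key, integral_sub hsum e3, integral_add e1 e2, integral_neg]
  rw [show (fun t => (Real.exp (-x * t) - Real.exp (-(x+1) * t)) / 2)
      = fun t => (Real.exp (-x * t) - Real.exp (-(x+1) * t)) * (1/2) by funext t; ring]
  rw [integral_mul_const, integral_sub (integrable_exp_mul hx) (integrable_exp_mul hx1),
    integral_exp_mul hx, integral_exp_mul hx1, ← F_def]
  ring

lemma K_hasDerivAt {x₀ : ℝ} (hx : 0 < x₀) :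
    HasDerivAt (fun x => J x - J (x+1))
      (Real.log (x₀+1) - Real.log x₀ - 1/(2*x₀) - 1/(2*(x₀+1))) x₀ := by
  have hε : 0 < x₀ / 2 := by linarith
  have key := hasDerivAt_integral_of_dominated_loc_of_deriv_le
    (μ := volume.restrict (Ioi (0:ℝ))) (x₀ := x₀)
    (F := fun x t => binetPhi t * (Real.exp (-x * t) - Real.exp (-(x+1) * t)))
    (F' := fun x t => binetPhi t * (t * (Real.exp (-(x+1) * t) - Real.exp (-x * t))))
    (bound := fun t => 2 * Real.exp (-(x₀/2) * t)) (Metric.ball_mem_nhds x₀ hε)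
    (Eventually.of_forall fun x => by
      apply ContinuousOn.aestronglyMeasurable _ measurableSet_Ioi
      exact phi_continuousOn.mul
        (((Real.continuous_exp.comp (continuous_const.mul continuous_id)).sub
          (Real.continuous_exp.comp (continuous_const.mul continuous_id))).continuousOn))
    (integrableOn_K_integrand hx)
    K_deriv_aesm
    (by
      refine (ae_restrict_iff' measurableSet_Ioi).2 (ae_of_all _ fun t ht x hx' => ?_)
      have hxt : x₀ / 2 < x := by
        have := abs_sub_lt_iff.1 (mem_ball_iff_norm.1 hx')
        linarith [this.2]
      exact K_deriv_bound (mem_Ioi.1 ht) hxt.le)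
    ((integrable_exp_mul hε).const_mul 2)
    (by
      refine (ae_restrict_iff' measurableSet_Ioi).2 (ae_of_all _ fun t ht x _ => ?_)
      have h := ((hasDerivAt_exp_mul t x).sub (hasDerivAt_exp_mul' t x)).const_mul (binetPhi t)
      refine h.congr_deriv ?_
      ring)
  have hd := key.2
  rw [K_deriv_value hx, F_eq x₀ hx] at hd
  have heq : (fun x => ∫ t in Ioi (0:ℝ),
      binetPhi t * (Real.exp (-x * t) - Real.exp (-(x+1) * t)))
      =ᶠ[𝓝 x₀] (fun x => J x - J (x+1)) := by
    filter_upwards [eventually_gt_nhds hx] with x hx'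
    exact K_eq_integral hx'
  have := hd.congr_of_eventuallyEq heq.symm
  refine this.congr_deriv ?_
  field_simp
  ring

noncomputable def E (x : ℝ) : ℝ := (x + 1/2) * (Real.log (x+1) - Real.log x) - 1

lemma E_hasDerivAt {x : ℝ} (hx : 0 < x) :
    HasDerivAt E (Real.log (x+1) - Real.log x - 1/(2*x) - 1/(2*(x+1))) x := by
  have h1 : HasDerivAt (fun x : ℝ => Real.log (x+1)) (1/(x+1)) x := by
    simpa using ((hasDerivAt_id x).add_const 1).log
      (by simp only [id]; intro h; linarith)
  have h2 : HasDerivAt Real.log (1/x) x := by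
    simpa [one_div] using Real.hasDerivAt_log (ne_of_gt hx)
  have h3 : HasDerivAt (fun x : ℝ => x + 1/2) 1 x := (hasDerivAt_id x).add_const _
  have h := (h3.mul (h1.sub h2)).sub_const 1
  have hE : E = fun x => (x + 1/2) * (Real.log (x+1) - Real.log x) - 1 := rfl
  rw [hE]
  refine h.congr_deriv ?_
  simp only [Pi.sub_apply]
  field_simp
  ring

lemma tendsto_E : Tendsto E atTop (𝓝 0) := by
  have h1 : Tendsto (fun x : ℝ => x * Real.log (1 + 1/x)) atTop (𝓝 1) := by
    simpa using Real.tendsto_mul_log_one_add_div_atTop 1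
  have h2 : Tendsto (fun x : ℝ => (1/2) * (Real.log (x+1) - Real.log x)) atTop (𝓝 0) := by
    simpa using tendsto_log_one_add_one_div.const_mul (1/2:ℝ)
  have h3 : Tendsto (fun x : ℝ => x * Real.log (1 + 1/x)
      + (1/2) * (Real.log (x+1) - Real.log x) - 1) atTop (𝓝 0) := by
    have := (h1.add h2).sub_const 1
    simpa using this
  apply h3.congr'
  filter_upwards [eventually_gt_atTop (0:ℝ)] with x hx
  have : Real.log (x+1) - Real.log x = Real.log (1 + 1/x) := by
    rw [← Real.log_div (by positivity) (ne_of_gt hx)]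
    congr 1
    field_simp
  simp only [E, this]
  ring

lemma tendsto_K : Tendsto (fun x => J x - J (x+1)) atTop (𝓝 0) := by
  have hb : Tendsto (fun x : ℝ => 2 * (1/x)) atTop (𝓝 0) := by
    simpa [one_div] using (tendsto_inv_atTop_zero (𝕜 := ℝ)).const_mul (2:ℝ)
  apply squeeze_zero_norm' _ hb
  · filter_upwards [eventually_gt_atTop (0:ℝ)] with x hx
    have h1 := abs_J_le hx
    have h2 := abs_J_le (show (0:ℝ) < x + 1 by linarith)
    rw [Real.norm_eq_abs]
    calc |J x - J (x+1)| ≤ |J x| + |J (x+1)| := abs_sub _ _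
      _ ≤ 1/x + 1/x := by
          have : 1/(x+1) ≤ 1/x := by
            apply one_div_le_one_div_of_le hx; linarith
          linarith
      _ = 2 * (1/x) := by ring

lemma K_eq : ∀ x, 0 < x → J x - J (x+1) = (x + 1/2) * (Real.log (x+1) - Real.log x) - 1 := by
  have h := eq_of_hasDerivAt_of_tendsto
    (f := fun x => J x - J (x+1)) (g := E)
    (d := fun x => Real.log (x+1) - Real.log x - 1/(2*x) - 1/(2*(x+1)))
    (fun x hx => K_hasDerivAt hx) (fun x hx => E_hasDerivAt hx)
    (by simpa using tendsto_K.sub tendsto_E)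
  intro x hx
  exact h x hx

noncomputable def G (x : ℝ) : ℝ :=
  Real.log (Real.Gamma (x+1)) - ((x + 1/2) * Real.log x - x + (1/2) * Real.log (2*π)) - J x

lemma G_succ {x : ℝ} (hx : 0 < x) : G (x+1) = G x := by
  have hΓ : Real.Gamma (x+1+1) = (x+1) * Real.Gamma (x+1) :=
    Real.Gamma_add_one (by linarith)
  have hΓpos : 0 < Real.Gamma (x+1) := Real.Gamma_pos_of_pos (by linarith)
  have hlog : Real.log (Real.Gamma (x+1+1))
      = Real.log (x+1) + Real.log (Real.Gamma (x+1)) := by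
    rw [hΓ, Real.log_mul (by linarith) (ne_of_gt hΓpos)]
  have hK := K_eq x hx
  simp only [G, hlog]
  ring_nf
  ring_nf at hK
  linarith

lemma G_add_nat {x : ℝ} (hx : 0 < x) : ∀ n : ℕ, G (x + n) = G x := by
  intro n
  induction n with
  | zero => simp
  | succ n ih =>
    have h1 : x + (n+1 : ℕ) = (x + n) + 1 := by push_cast; ring
    rw [h1, G_succ (by positivity)]
    exact ih

/-- Stirling's formula in log form. -/
lemma stirling_log :
    Tendsto (fun n : ℕ => Real.log (Nat.factorial n) - ((n:ℝ) + 1/2) * Real.log n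
      + n - (1/2) * Real.log (2*π)) atTop (𝓝 0) := by
  have hsp : (0:ℝ) < Real.sqrt π := Real.sqrt_pos.2 Real.pi_pos
  have h1 : Tendsto (fun n : ℕ => Real.log (Stirling.stirlingSeq n)) atTop
      (𝓝 (Real.log (Real.sqrt π))) :=
    ((Real.continuousAt_log (ne_of_gt hsp)).tendsto).comp Stirling.tendsto_stirlingSeq_sqrt_pi
  have h2 : Tendsto (fun n : ℕ => Real.log (Stirling.stirlingSeq n)
      + (1/2) * Real.log 2 - (1/2) * Real.log (2*π)) atTop (𝓝 0) := by
    have := (h1.add_const ((1/2) * Real.log 2)).sub_const ((1/2) * Real.log (2*π))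
    convert this using 2
    rw [Real.log_sqrt Real.pi_pos.le, Real.log_mul two_ne_zero (ne_of_gt Real.pi_pos)]
    ring
  apply h2.congr'
  filter_upwards [eventually_ge_atTop 1] with n hn
  have hn0 : (0:ℝ) < n := by exact_mod_cast hn
  have hfac : (0:ℝ) < Nat.factorial n := by exact_mod_cast Nat.factorial_pos n
  have h2n : (0:ℝ) < Real.sqrt (2*n) := Real.sqrt_pos.2 (by positivity)
  have hpow : (0:ℝ) < ((n:ℝ) / Real.exp 1)^n := by positivity
  rw [Stirling.stirlingSeq, Real.log_div (ne_of_gt hfac) (by positivity),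
    Real.log_mul (ne_of_gt h2n) (ne_of_gt hpow), Real.log_sqrt (by positivity),
    Real.log_pow, Real.log_div (ne_of_gt hn0) (Real.exp_ne_zero 1),
    Real.log_mul two_ne_zero (ne_of_gt hn0), Real.log_exp]
  ring

/-- Gamma recurrence iterated. -/
lemma Gamma_shift {x : ℝ} (hx : 0 < x) : ∀ n : ℕ,
    Real.Gamma (x + n + 1) = (∏ j ∈ Finset.range (n+1), (x + j)) * Real.Gamma x := by
  intro n
  induction n with
  | zero => simpa using Real.Gamma_add_one (ne_of_gt hx)
  | succ n ih =>
    have h1 : x + (n+1:ℕ) + 1 = (x + n + 1) + 1 := by push_cast; ring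
    have h2 : 0 < x + n + 1 := by positivity
    have hp := Finset.prod_range_succ (fun j : ℕ => (x + (j:ℝ))) (n+1)
    rw [h1, Real.Gamma_add_one (ne_of_gt h2), ih, hp]
    push_cast
    ring

lemma log_Gamma_shift {x : ℝ} (hx : 0 < x) (n : ℕ) :
    Real.log (Real.Gamma (x + n + 1))
      = (∑ j ∈ Finset.range (n+1), Real.log (x + j)) + Real.log (Real.Gamma x) := by
  have hprodpos : ∀ j ∈ Finset.range (n+1), (0:ℝ) < x + j := by
    intro j _; positivity
  have hprod : (0:ℝ) < ∏ j ∈ Finset.range (n+1), (x + j) :=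
    Finset.prod_pos hprodpos
  rw [Gamma_shift hx n, Real.log_mul (ne_of_gt hprod)
    (ne_of_gt (Real.Gamma_pos_of_pos hx)),
    Real.log_prod (fun j hj => ne_of_gt (hprodpos j hj))]

/-- Gauss/Euler limit in log form. -/
lemma gauss_log {x : ℝ} (hx : 0 < x) :
    Tendsto (fun n : ℕ => x * Real.log n + Real.log (Nat.factorial n)
      - ∑ j ∈ Finset.range (n+1), Real.log (x + j)) atTop
      (𝓝 (Real.log (Real.Gamma x))) := by
  have hΓ : 0 < Real.Gamma x := Real.Gamma_pos_of_pos hx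
  have h1 : Tendsto (fun n : ℕ => Real.log (Real.GammaSeq x n)) atTop
      (𝓝 (Real.log (Real.Gamma x))) :=
    ((Real.continuousAt_log (ne_of_gt hΓ)).tendsto).comp (Real.GammaSeq_tendsto_Gamma x)
  apply h1.congr'
  filter_upwards [eventually_ge_atTop 1] with n hn
  have hn0 : (0:ℝ) < n := by exact_mod_cast hn
  have hfac : (0:ℝ) < Nat.factorial n := by exact_mod_cast Nat.factorial_pos n
  have hprodpos : ∀ j ∈ Finset.range (n+1), (0:ℝ) < x + j := fun j _ => by positivity
  have hprod : (0:ℝ) < ∏ j ∈ Finset.range (n+1), (x + j) := Finset.prod_pos hprodpos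
  rw [Real.GammaSeq, Real.log_div (by positivity) (ne_of_gt hprod),
    Real.log_mul (by positivity) (ne_of_gt hfac), Real.log_rpow hn0,
    Real.log_prod (fun j hj => ne_of_gt (hprodpos j hj))]

lemma tendsto_B {x : ℝ} (hx : 0 < x) :
    Tendsto (fun n : ℕ => x - (x + n + 1/2) * Real.log (1 + x/n)) atTop (𝓝 0) := by
  have hnat : Tendsto (fun n : ℕ => (n:ℝ)) atTop atTop := tendsto_natCast_atTop_atTop
  have h1 : Tendsto (fun n : ℕ => (n:ℝ) * Real.log (1 + x/n)) atTop (𝓝 x) :=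
    (Real.tendsto_mul_log_one_add_div_atTop x).comp hnat
  have h2 : Tendsto (fun n : ℕ => Real.log (1 + x/n)) atTop (𝓝 0) := by
    have ha : Tendsto (fun n : ℕ => 1 + x/(n:ℝ)) atTop (𝓝 1) := by
      have := (tendsto_inv_atTop_zero (𝕜 := ℝ)).comp hnat
      have h' := this.const_mul x
      simpa [div_eq_mul_inv] using (tendsto_const_nhds (x := (1:ℝ))).add h'
    have := ((Real.continuousAt_log one_ne_zero).tendsto).comp ha
    simpa [Function.comp_def] using this
  have h3 : Tendsto (fun n : ℕ => (x + 1/2) * Real.log (1 + x/n)) atTop (𝓝 0) := by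
    simpa using h2.const_mul (x + 1/2)
  have h4 : Tendsto (fun n : ℕ => x - ((n:ℝ) * Real.log (1 + x/n)
      + (x + 1/2) * Real.log (1 + x/n))) atTop (𝓝 0) := by
    have := (tendsto_const_nhds (x := x)).sub (h1.add h3)
    simpa using this
  apply h4.congr'
  filter_upwards [] with n
  ring

lemma tendsto_J_shift {x : ℝ} (hx : 0 < x) :
    Tendsto (fun n : ℕ => J (x + n)) atTop (𝓝 0) := by
  apply squeeze_zero_norm' _ tendsto_one_div_atTop_nhds_zero_nat
  · filter_upwards [eventually_ge_atTop 1] with n hn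
    have hn0 : (0:ℝ) < n := by exact_mod_cast hn
    have h1 := abs_J_le (show (0:ℝ) < x + n by positivity)
    rw [Real.norm_eq_abs]
    refine h1.trans ?_
    apply one_div_le_one_div_of_le hn0
    linarith

lemma G_tendsto {x : ℝ} (hx : 0 < x) :
    Tendsto (fun n : ℕ => G (x + n)) atTop (𝓝 0) := by
  have hgauss := gauss_log hx
  have hstir := stirling_log
  have hB := tendsto_B hx
  have hJ := tendsto_J_shift hx
  have hcomb : Tendsto (fun n : ℕ =>
      (Real.log (Real.Gamma x) - (x * Real.log n + Real.log (Nat.factorial n)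
        - ∑ j ∈ Finset.range (n+1), Real.log (x + j)))
      + (Real.log (Nat.factorial n) - ((n:ℝ) + 1/2) * Real.log n + n
        - (1/2) * Real.log (2*π))
      + (x - (x + n + 1/2) * Real.log (1 + x/n))
      - J (x + n)) atTop (𝓝 0) := by
    have h1 := ((tendsto_const_nhds (x := Real.log (Real.Gamma x))).sub hgauss)
    have := ((h1.add hstir).add hB).sub hJ
    simpa using this
  apply hcomb.congr'
  filter_upwards [eventually_ge_atTop 1] with n hn
  have hn0 : (0:ℝ) < n := by exact_mod_cast hn
  have hxn : (0:ℝ) < x + n := by positivity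
  have hlog1 : Real.log (1 + x/n) = Real.log (x + n) - Real.log n := by
    rw [← Real.log_div (ne_of_gt hxn) (ne_of_gt hn0)]
    congr 1
    field_simp
    ring
  simp only [G, log_Gamma_shift hx n, hlog1]
  ring

theorem G_eq_zero {x : ℝ} (hx : 0 < x) : G x = 0 := by
  have h1 : Tendsto (fun n : ℕ => G (x + n)) atTop (𝓝 (G x)) := by
    apply Tendsto.congr' _ tendsto_const_nhds
    filter_upwards [] with n
    exact (G_add_nat hx n).symm
  exact tendsto_nhds_unique h1 (G_tendsto hx)


end Binet
end BinetAux

/-- Binet's first formula: for `x > 0`,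
`ln Γ(x+1) = (x + 1/2)·ln x − x + (1/2)·ln(2π) + ∫₀^∞ φ(t)·e^{−xt} dt`. -/
theorem binet_first_formula :
    ∀ x : ℝ, 0 < x →
      Real.log (Real.Gamma (x + 1)) =
        (x + 1 / 2) * Real.log x - x + (1 / 2) * Real.log (2 * π) +
          ∫ t in Set.Ioi (0 : ℝ), binetPhi t * Real.exp (-x * t) := by
  intro x hx
  have h := Binet.G_eq_zero hx
  simp only [Binet.G] at h
  have hJ : (∫ t in Set.Ioi (0 : ℝ), binetPhi t * Real.exp (-x * t)) = Binet.J x := rfl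
  rw [hJ]
  linarith
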